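/- arXiv:2210.13941 — 4 statements merged into one kernel-verified Lean document; each statement's English description precedes it below -/
import Mathlib

section
/- Let G be a finite simple undirected graph with adjacency matrix A. For α → 0+ the ranking obtained by Katz centrality reduces to the degree ranking: for any two vertices v_i, v_j with deg(v_i) > deg(v_j), there exists ε > 0 such that for all α with 0 < α < ε one has [(I − αA)^{-1}𝟙]_i > [(I − αA)^{-1}𝟙]_j. -/
/-!
Write `K a = (1 - a • A)⁻¹ *ᵥ v`. The resolvent identity gives `K a = v + a • A *ᵥ K a`, and
`K a → v` as `a → 0`, so `K a i - K a j ≥ a * ((A *ᵥ K a) i - (A *ᵥ K a) j)`, where the last factor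
tends to `(A *ᵥ v) i - (A *ᵥ v) j > 0`. For the adjacency matrix and `v = 1`, `A *ᵥ v` is the
degree vector.
-/

open Matrix

namespace Matrix

variable {n 𝕜 : Type*} [Fintype n] [DecidableEq n]

theorem inv_one_sub_smul_mulVec [CommRing 𝕜] (A : Matrix n n 𝕜) {a : 𝕜}
    (ha : IsUnit (1 - a • A).det) (v : n → 𝕜) :
    (1 - a • A)⁻¹ *ᵥ v = v + a • A *ᵥ ((1 - a • A)⁻¹ *ᵥ v) := by
  have hB : (1 - a • A) * (1 - a • A)⁻¹ = 1 := mul_nonsing_inv _ ha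
  rw [sub_mul, one_mul, smul_mul_assoc] at hB
  have hres : (1 - a • A)⁻¹ = 1 + a • (A * (1 - a • A)⁻¹) := sub_eq_iff_eq_add.mp hB
  conv_lhs => rw [hres]
  rw [add_mulVec, one_mulVec, smul_mulVec, mulVec_mulVec]

theorem continuousAt_inv_one_sub_smul [Field 𝕜] [TopologicalSpace 𝕜]
    [IsTopologicalDivisionRing 𝕜] (A : Matrix n n 𝕜) :
    ContinuousAt (fun a : 𝕜 => (1 - a • A)⁻¹) 0 := by
  have hinv : ContinuousAt Inv.inv (1 - (0 : 𝕜) • A) := by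
    refine continuousAt_matrix_inv _ ?_
    rw [zero_smul, sub_zero, det_one, Ring.inverse_eq_inv']
    exact continuousAt_inv₀ one_ne_zero
  exact hinv.comp (f := fun a : 𝕜 => 1 - a • A)
    (continuous_const.sub (continuous_id.smul continuous_const)).continuousAt

theorem eventually_isUnit_det_one_sub_smul [Field 𝕜] [TopologicalSpace 𝕜] [IsTopologicalRing 𝕜]
    [T1Space 𝕜] (A : Matrix n n 𝕜) :
    ∀ᶠ a in nhds (0 : 𝕜), IsUnit (1 - a • A).det := by
  have hdet : Continuous fun a : 𝕜 => (1 - a • A).det :=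
    (continuous_const.sub (continuous_id.smul continuous_const)).matrix_det
  have h0 : (1 - (0 : 𝕜) • A).det ≠ 0 := by simp
  filter_upwards [hdet.continuousAt.eventually_ne h0] with a ha using isUnit_iff_ne_zero.mpr ha

theorem eventually_inv_one_sub_smul_mulVec_lt (A : Matrix n n ℝ) (v : n → ℝ) {i j : n}
    (hv : v j ≤ v i) (h : (A *ᵥ v) j < (A *ᵥ v) i) :
    ∀ᶠ a in nhdsWithin (0 : ℝ) (Set.Ioi 0),
      ((1 - a • A)⁻¹ *ᵥ v) j < ((1 - a • A)⁻¹ *ᵥ v) i := by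
  set K : ℝ → n → ℝ := fun a => A *ᵥ ((1 - a • A)⁻¹ *ᵥ v)
  have hK : ContinuousAt K 0 :=
    (Continuous.matrix_mulVec continuous_const
      (continuous_id.matrix_mulVec continuous_const)).continuousAt.comp
      (continuousAt_inv_one_sub_smul A)
  have hK0 : K 0 = A *ᵥ v := by simp [K]
  have hlt : ∀ᶠ a in nhds (0 : ℝ), K a j < K a i := by
    have hK' := hK.tendsto
    rw [hK0] at hK'
    exact ((continuous_apply j).tendsto _ |>.comp hK').eventually_lt
      ((continuous_apply i).tendsto _ |>.comp hK') h
  filter_upwards [self_mem_nhdsWithin, nhdsWithin_le_nhds hlt,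
    nhdsWithin_le_nhds (eventually_isUnit_det_one_sub_smul A)] with a (ha : 0 < a) hKa hdet
  rw [inv_one_sub_smul_mulVec A hdet, Pi.add_apply, Pi.add_apply, Pi.smul_apply, Pi.smul_apply,
    smul_eq_mul, smul_eq_mul]
  exact add_lt_add_of_le_of_lt hv (mul_lt_mul_of_pos_left hKa ha)

end Matrix

theorem stmt6_general {N : ℕ} (G : SimpleGraph (Fin N)) [DecidableRel G.Adj]
    (i j : Fin N) (h : G.degree j < G.degree i) :
    ∃ ε > 0, ∀ α : ℝ, 0 < α → α < ε →
      ((1 - α • G.adjMatrix ℝ)⁻¹ *ᵥ (fun _ => 1)) j <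
      ((1 - α • G.adjMatrix ℝ)⁻¹ *ᵥ (fun _ => 1)) i := by
  have hdeg : (G.adjMatrix ℝ *ᵥ fun _ => 1) j < (G.adjMatrix ℝ *ᵥ fun _ => 1) i := by
    simpa [SimpleGraph.adjMatrix_mulVec_apply] using h
  obtain ⟨ε, hε, hsmall⟩ := (nhdsGT_basis (0 : ℝ)).eventually_iff.mp
    (eventually_inv_one_sub_smul_mulVec_lt (G.adjMatrix ℝ) (fun _ => 1) (le_refl 1) hdeg)
  exact ⟨ε, hε, fun α hα hαε => hsmall ⟨hα, hαε⟩⟩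

/-- As α → 0⁺ the Katz centrality ranking reduces to the degree ranking: if
deg(v_i) > deg(v_j) then for all sufficiently small α > 0 the Katz centrality of v_i
exceeds that of v_j. -/
theorem stmt6 {N : ℕ} (G : SimpleGraph (Fin N)) [DecidableRel G.Adj]
    (hE : G.edgeSet.Nonempty) (i j : Fin N) (h : G.degree j < G.degree i) :
    ∃ ε > 0, ∀ α : ℝ, 0 < α → α < ε →
      ((1 - α • G.adjMatrix ℝ)⁻¹ *ᵥ (fun _ => 1)) j <
      ((1 - α • G.adjMatrix ℝ)⁻¹ *ᵥ (fun _ => 1)) i :=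
  stmt6_general G i j h
end

section
/- Let G be a connected finite simple undirected graph with adjacency matrix A, spectral radius ρ(A) = λ_1, and Perron eigenvector p_1 (the entrywise positive unit eigenvector associated with λ_1). As α → 1/ρ(A) from below, the Katz centrality ranking tends to the eigenvector centrality ranking: for any two vertices v_i, v_j with p_1(i) > p_1(j), there exists ε > 0 such that for all α with 1/ρ(A) − ε < α < 1/ρ(A) one has [(I − αA)^{-1}𝟙]_i > [(I − αA)^{-1}𝟙]_j. -/
/-!
Expanding `𝟙` in an orthonormal eigenbasis `(b_k, μ_k)` of the symmetric matrix `A` gives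
`(1 - α A)⁻¹ 𝟙 = ∑ₖ ⟨b_k, 𝟙⟩ / (1 - α μ_k) • b_k`, so `(1 - α ρ) (1 - α A)⁻¹ 𝟙` tends, as
`α → ρ⁻¹`, to the orthogonal projection of `𝟙` onto the `ρ`-eigenspace. For a connected graph
this eigenspace is spanned by the positive vector `p₁` (a nonnegative `ρ`-eigenvector vanishing at
a vertex vanishes at its neighbours), so the limit is a positive multiple of `p₁`, and the strict
inequality `p₁ j < p₁ i` persists for `α` close to `ρ⁻¹`.
-/

open Matrix Filter Topology

lemma one_sub_inv_mul_ne_zero {r μ : ℝ} (hr : r ≠ 0) (hμ : μ ≠ r) : 1 - r⁻¹ * μ ≠ 0 := by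
  rw [sub_ne_zero, ne_comm, Ne, inv_mul_eq_one₀ hr]
  exact hμ.symm

lemma eventually_one_sub_mul_ne_zero {r : ℝ} (hr : r ≠ 0) (μ : ℝ) :
    ∀ᶠ α in 𝓝[≠] r⁻¹, 1 - α * μ ≠ 0 := by
  by_cases hμ : μ = r
  · filter_upwards [self_mem_nhdsWithin] with α hα
    rw [hμ, sub_ne_zero, ne_comm, Ne, mul_eq_one_iff_eq_inv₀ hr]
    exact hα
  · have hlim : Tendsto (fun α => 1 - α * μ) (𝓝 r⁻¹) (𝓝 (1 - r⁻¹ * μ)) :=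
      (continuous_const.sub (continuous_id.mul continuous_const)).tendsto _
    exact nhdsWithin_le_nhds (hlim.eventually_ne (one_sub_inv_mul_ne_zero hr hμ))

lemma tendsto_one_sub_mul_div_one_sub_mul {r : ℝ} (hr : r ≠ 0) (μ : ℝ) :
    Tendsto (fun α => (1 - α * r) / (1 - α * μ)) (𝓝[≠] r⁻¹) (𝓝 (if μ = r then 1 else 0)) := by
  split_ifs with hμ
  · subst hμ
    refine tendsto_const_nhds.congr' ?_
    filter_upwards [eventually_one_sub_mul_ne_zero hr μ] with α hα
    exact (div_self hα).symm
  · have hlim : Tendsto (fun α => (1 - α * r) / (1 - α * μ)) (𝓝 r⁻¹)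
        (𝓝 ((1 - r⁻¹ * r) / (1 - r⁻¹ * μ))) :=
      ((continuous_const.sub (continuous_id.mul continuous_const)).tendsto _).div
        ((continuous_const.sub (continuous_id.mul continuous_const)).tendsto _)
        (one_sub_inv_mul_ne_zero hr hμ)
    rw [inv_mul_cancel₀ hr, sub_self, zero_div] at hlim
    exact tendsto_nhdsWithin_of_tendsto_nhds hlim

lemma Matrix.IsSymm.dotProduct_eq_zero_of_mulVec_eq_smul {n R : Type*} [Fintype n] [CommRing R]
    [IsDomain R] {A : Matrix n n R} (hA : A.IsSymm) {u w : n → R} {a b : R} (hu : A *ᵥ u = a • u)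
    (hw : A *ᵥ w = b • w) (hab : a ≠ b) : u ⬝ᵥ w = 0 := by
  have h : a * (u ⬝ᵥ w) = b * (u ⬝ᵥ w) := calc
    a * (u ⬝ᵥ w) = (Aᵀ *ᵥ u) ⬝ᵥ w := by
      rw [hA.eq, hu, smul_dotProduct, smul_eq_mul]
    _ = b * (u ⬝ᵥ w) := by
      rw [mulVec_transpose, ← dotProduct_mulVec, hw, dotProduct_smul, smul_eq_mul]
  by_contra huw
  exact hab (mul_right_cancel₀ huw h)

namespace Matrix.IsHermitian

variable {n : Type*} [Fintype n] [DecidableEq n] {A : Matrix n n ℝ} (hA : A.IsHermitian)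

noncomputable def eigenProj (r : ℝ) (v : n → ℝ) : n → ℝ :=
  ∑ k with hA.eigenvalues k = r, (⇑(hA.eigenvectorBasis k) ⬝ᵥ v) • ⇑(hA.eigenvectorBasis k)

lemma sum_dotProduct_smul_eigenvectorBasis (v : n → ℝ) :
    ∑ k, (⇑(hA.eigenvectorBasis k) ⬝ᵥ v) • ⇑(hA.eigenvectorBasis k) = v := by
  have := congrArg WithLp.ofLp ((hA.eigenvectorBasis).sum_repr' (WithLp.toLp 2 v))
  simpa [EuclideanSpace.inner_eq_star_dotProduct, dotProduct_comm] using this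

lemma inv_one_sub_smul_mulVec {α : ℝ} (hα : ∀ k, 1 - α * hA.eigenvalues k ≠ 0) (v : n → ℝ) :
    (1 - α • A)⁻¹ *ᵥ v = ∑ k, ((⇑(hA.eigenvectorBasis k) ⬝ᵥ v) / (1 - α * hA.eigenvalues k)) •
      ⇑(hA.eigenvectorBasis k) := by
  have hsolve (w : n → ℝ) : (1 - α • A) *ᵥ ∑ k, ((⇑(hA.eigenvectorBasis k) ⬝ᵥ w) /
      (1 - α * hA.eigenvalues k)) • ⇑(hA.eigenvectorBasis k) = w := by
    conv_rhs => rw [← hA.sum_dotProduct_smul_eigenvectorBasis w]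
    simp only [mulVec_sum, mulVec_smul, sub_mulVec, one_mulVec, smul_mulVec,
      hA.mulVec_eigenvectorBasis, smul_smul]
    refine Finset.sum_congr rfl fun k _ => ?_
    ext m
    simp only [Pi.smul_apply, Pi.sub_apply, smul_eq_mul]
    field_simp [hα k]
  have hunit : IsUnit (1 - α • A) := mulVec_surjective_iff_isUnit.1 fun w => ⟨_, hsolve w⟩
  conv_lhs => rw [← hsolve v]
  rw [mulVec_mulVec, nonsing_inv_mul _ ((isUnit_iff_isUnit_det _).1 hunit), one_mulVec]

lemma tendsto_one_sub_mul_smul_inv_one_sub_smul_mulVec {r : ℝ} (hr : r ≠ 0) (v : n → ℝ) :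
    Tendsto (fun α => (1 - α * r) • ((1 - α • A)⁻¹ *ᵥ v)) (𝓝[≠] r⁻¹) (𝓝 (hA.eigenProj r v)) := by
  have hev : ∀ᶠ α in 𝓝[≠] r⁻¹, ∀ k, 1 - α * hA.eigenvalues k ≠ 0 :=
    eventually_all.2 fun k => eventually_one_sub_mul_ne_zero hr _
  have hlim := tendsto_finsetSum Finset.univ fun k _ =>
    ((tendsto_one_sub_mul_div_one_sub_mul hr (hA.eigenvalues k)).mul_const
      (⇑(hA.eigenvectorBasis k) ⬝ᵥ v)).smul_const ⇑(hA.eigenvectorBasis k)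
  simp only [ite_mul, one_mul, zero_mul, ite_smul, zero_smul, ← Finset.sum_filter] at hlim
  refine hlim.congr' (hev.mono fun α hα => ?_)
  dsimp only
  rw [hA.inv_one_sub_smul_mulVec hα, Finset.smul_sum]
  refine Finset.sum_congr rfl fun k _ => ?_
  rw [smul_smul]
  congr 1
  ring

lemma mulVec_eigenProj (r : ℝ) (v : n → ℝ) : A *ᵥ hA.eigenProj r v = r • hA.eigenProj r v := by
  simp only [eigenProj, mulVec_sum, mulVec_smul, hA.mulVec_eigenvectorBasis, Finset.smul_sum]
  refine Finset.sum_congr rfl fun k hk => ?_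
  rw [(Finset.mem_filter.1 hk).2, smul_comm]

lemma dotProduct_eigenProj {r : ℝ} {p : n → ℝ} (hp : A *ᵥ p = r • p) (v : n → ℝ) :
    p ⬝ᵥ hA.eigenProj r v = p ⬝ᵥ v := by
  conv_rhs => rw [← hA.sum_dotProduct_smul_eigenvectorBasis v]
  simp only [eigenProj, dotProduct_sum, dotProduct_smul, Finset.sum_filter]
  refine Finset.sum_congr rfl fun k _ => ?_
  split_ifs with hk
  · exact dotProduct_smul _ _ _
  · rw [dotProduct_zero, (isHermitian_iff_isSymm.1 hA).dotProduct_eq_zero_of_mulVec_eq_smul hp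
      (hA.mulVec_eigenvectorBasis k) (Ne.symm hk), smul_zero]

lemma eigenProj_eq_smul {r : ℝ} {p : n → ℝ} (hp : A *ᵥ p = r • p)
    (hsimple : ∀ u, A *ᵥ u = r • u → ∃ t : ℝ, u = t • p) (v : n → ℝ) :
    hA.eigenProj r v = ((p ⬝ᵥ v) / (p ⬝ᵥ p)) • p := by
  obtain ⟨c, hc⟩ := hsimple _ (hA.mulVec_eigenProj r v)
  rcases eq_or_ne p 0 with rfl | hp0
  · simp [hc]
  have hproj := hA.dotProduct_eigenProj hp v
  rw [hc, dotProduct_smul, smul_eq_mul] at hproj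
  rw [hc, ← hproj, mul_div_cancel_right₀ _ (dotProduct_self_eq_zero.not.2 hp0)]

end Matrix.IsHermitian

namespace SimpleGraph

variable {V : Type*} [Fintype V] {G : SimpleGraph V} [DecidableRel G.Adj]

lemma Connected.eq_zero_of_adjMatrix_mulVec_eq_smul (hG : G.Connected) {r : ℝ} {w : V → ℝ}
    (hw : G.adjMatrix ℝ *ᵥ w = r • w) (hw0 : 0 ≤ w) {a : V} (ha : w a = 0) : w = 0 := by
  have hspread (x : V) (hx : w x = 0) (y : V) (hxy : G.Adj x y) : w y = 0 := by
    have hsum : ∑ z ∈ G.neighborFinset x, w z = 0 := by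
      rw [← adjMatrix_mulVec_apply, hw, Pi.smul_apply, hx, smul_zero]
    exact (Finset.sum_eq_zero_iff_of_nonneg fun z _ => hw0 z).1 hsum y
      ((mem_neighborFinset G x y).2 hxy)
  funext y
  obtain ⟨walk⟩ := hG.preconnected a y
  induction walk with
  | nil => exact ha
  | cons hxy _ ih => exact ih (hspread _ ha _ hxy)

lemma Connected.exists_eq_smul_of_adjMatrix_mulVec_eq_smul (hG : G.Connected) {r : ℝ}
    {p u : V → ℝ} (hp : G.adjMatrix ℝ *ᵥ p = r • p) (hpos : ∀ x, 0 < p x)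
    (hu : G.adjMatrix ℝ *ᵥ u = r • u) : ∃ t : ℝ, u = t • p := by
  have := hG.nonempty
  obtain ⟨a, ha⟩ := Finite.exists_min fun x => u x / p x
  refine ⟨u a / p a, sub_eq_zero.1
    (hG.eq_zero_of_adjMatrix_mulVec_eq_smul (r := r) (a := a) ?_ ?_ ?_)⟩
  · rw [mulVec_sub, mulVec_smul, hp, hu, smul_sub, smul_comm]
  · intro x
    have := (le_div_iff₀ (hpos x)).1 (ha x)
    simp only [Pi.zero_apply, Pi.sub_apply, Pi.smul_apply, smul_eq_mul]
    linarith
  · simp [div_mul_cancel₀ _ (hpos a).ne']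

end SimpleGraph

theorem stmt7_general {N : ℕ} (G : SimpleGraph (Fin N)) [DecidableRel G.Adj]
    (hconn : G.Connected)
    (ρ : ℝ) (p₁ : Fin N → ℝ)
    (heig : G.adjMatrix ℝ *ᵥ p₁ = ρ • p₁)
    (hpos : ∀ t, 0 < p₁ t)
    (hρpos : 0 < ρ)
    (i j : Fin N) (hij : p₁ j < p₁ i) :
    ∃ ε > 0, ∀ α : ℝ, 1 / ρ - ε < α → α < 1 / ρ →
      ((1 - α • G.adjMatrix ℝ)⁻¹ *ᵥ (fun _ => 1)) j <
      ((1 - α • G.adjMatrix ℝ)⁻¹ *ᵥ (fun _ => 1)) i := by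
  have := hconn.nonempty
  set c := (p₁ ⬝ᵥ fun _ => 1) / (p₁ ⬝ᵥ p₁)
  have hc : 0 < c :=
    div_pos (Finset.sum_pos (fun t _ => mul_pos (hpos t) one_pos) Finset.univ_nonempty)
      (Finset.sum_pos (fun t _ => mul_pos (hpos t) (hpos t)) Finset.univ_nonempty)
  have hlim : Tendsto (fun α => (1 - α * ρ) • ((1 - α • G.adjMatrix ℝ)⁻¹ *ᵥ fun _ => 1))
      (𝓝[<] ρ⁻¹) (𝓝 (c • p₁)) := by
    have := (G.isHermitian_adjMatrix ℝ).tendsto_one_sub_mul_smul_inv_one_sub_smul_mulVec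
      hρpos.ne' fun _ => 1
    rw [Matrix.IsHermitian.eigenProj_eq_smul _ heig
      fun u hu => hconn.exists_eq_smul_of_adjMatrix_mulVec_eq_smul heig hpos hu] at this
    exact this.mono_left (nhdsLT_le_nhdsNE _)
  have hev := (tendsto_pi_nhds.1 hlim j).eventually_lt (tendsto_pi_nhds.1 hlim i)
    (mul_lt_mul_of_pos_left hij hc)
  obtain ⟨l, hl, hsub⟩ := mem_nhdsLT_iff_exists_Ioo_subset.1 hev
  refine ⟨ρ⁻¹ - l, sub_pos.2 hl, fun α hαl hαρ => ?_⟩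
  rw [one_div] at hαl hαρ
  have hgap : 0 < 1 - α * ρ :=
    sub_pos.2 ((mul_lt_mul_of_pos_right hαρ hρpos).trans_eq (inv_mul_cancel₀ hρpos.ne'))
  exact lt_of_mul_lt_mul_left (hsub ⟨by linarith, hαρ⟩) hgap.le

/-- As α → 1/ρ(A)⁻ the Katz centrality ranking tends to the eigenvector centrality
ranking: for a connected graph with Perron eigenvector p₁ (entrywise positive unit
eigenvector for the spectral radius ρ), if p₁(i) > p₁(j) then for all α close enough
to 1/ρ from below, KC(v_i) > KC(v_j). -/
theorem stmt7 {N : ℕ} (hN : 2 ≤ N) (G : SimpleGraph (Fin N)) [DecidableRel G.Adj]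
    (hconn : G.Connected)
    (ρ : ℝ) (p₁ : Fin N → ℝ)
    (heig : G.adjMatrix ℝ *ᵥ p₁ = ρ • p₁)
    (hpos : ∀ t, 0 < p₁ t)
    (hnorm : ∑ t, p₁ t ^ 2 = 1)
    (hρpos : 0 < ρ)
    (hρmax : ∀ μ ∈ spectrum ℝ (G.adjMatrix ℝ), |μ| ≤ ρ)
    (i j : Fin N) (hij : p₁ j < p₁ i) :
    ∃ ε > 0, ∀ α : ℝ, 1 / ρ - ε < α → α < 1 / ρ →
      ((1 - α • G.adjMatrix ℝ)⁻¹ *ᵥ (fun _ => 1)) j <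
      ((1 - α • G.adjMatrix ℝ)⁻¹ *ᵥ (fun _ => 1)) i :=
  stmt7_general G hconn ρ p₁ heig hpos hρpos i j hij
end

section
/- Let G be a finite simple undirected graph with adjacency matrix A. For β → 0+ the ranking obtained by subgraph centrality reduces to the degree ranking: for any two vertices v_i, v_j with deg(v_i) > deg(v_j), there exists ε > 0 such that for all β with 0 < β < ε one has [e^{βA}]_{ii} > [e^{βA}]_{jj}. -/
/-!
Put `f β = [e^{βA}]_{ii} - [e^{βA}]_{jj}`. Differentiating the exponential gives
`f^{(k)}(0) = (A^k)_{ii} - (A^k)_{jj}`, so `f(0) = f'(0) = 0` (zero diagonal) while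
`f''(0) = deg(v_i) - deg(v_j) > 0`. Hence `f'` is positive just to the right of `0`,
and `f` is strictly increasing there, starting from `0`.
-/

open Matrix NormedSpace Filter Set Topology

theorem eventually_nhdsGT_lt_of_deriv_deriv_pos {f : ℝ → ℝ} {x₀ : ℝ}
    (hf : 0 < deriv (deriv f) x₀) (hd : deriv f x₀ = 0) (hc : ContinuousAt f x₀) :
    ∀ᶠ x in 𝓝[>] x₀, f x₀ < f x := by
  have hpos : ∀ᶠ x in 𝓝[>] x₀, 0 < deriv f x :=
    deriv_pos_right_of_sign_deriv <| nhdsWithin_le_nhds <|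
      eventually_nhdsWithin_sign_eq_of_deriv_pos hf hd
  obtain ⟨u, hu, hpos⟩ := (nhdsGT_basis x₀).eventually_iff.mp hpos
  filter_upwards [Ioo_mem_nhdsGT hu] with x hx
  have hcont : ContinuousOn f (Icc x₀ x) := by
    intro y hy
    rcases hy.1.eq_or_lt with rfl | hy₀
    · exact hc.continuousWithinAt
    · exact (differentiableAt_of_deriv_ne_zero
        (hpos ⟨hy₀, hy.2.trans_lt hx.2⟩).ne').continuousAt.continuousWithinAt
  have hmono : StrictMonoOn f (Icc x₀ x) :=
    strictMonoOn_of_deriv_pos (convex_Icc _ _) hcont fun y hy => by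
      rw [interior_Icc] at hy
      exact hpos ⟨hy.1, hy.2.trans hx.2⟩
  exact hmono (left_mem_Icc.mpr hx.1.le) (right_mem_Icc.mpr hx.1.le) hx.1

namespace Matrix

variable {𝕂 m : Type*} [RCLike 𝕂] [Fintype m] [DecidableEq m]

theorem hasDerivAt_linearMap_exp_smul_mul (φ : Matrix m m 𝕂 →ₗ[𝕂] 𝕂) (M B : Matrix m m 𝕂)
    (t : 𝕂) :
    HasDerivAt (fun u : 𝕂 => φ (exp (u • M) * B)) (φ (exp (t • M) * M * B)) t := by
  -- The operator norm makes `Matrix m m 𝕂` a Banach algebra without changing its topology.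
  open scoped Norms.Operator in
  exact (LinearMap.toContinuousLinearMap φ).hasFDerivAt.comp_hasDerivAt t
    ((hasDerivAt_exp_smul_const M t).mul_const B)

theorem iterate_deriv_linearMap_exp_smul (φ : Matrix m m 𝕂 →ₗ[𝕂] 𝕂) (M : Matrix m m 𝕂)
    (k : ℕ) : deriv^[k] (fun u : 𝕂 => φ (exp (u • M))) = fun t => φ (exp (t • M) * M ^ k) := by
  induction k with
  | zero => simp
  | succ k ih =>
    rw [Function.iterate_succ_apply', ih]
    funext t
    rw [(hasDerivAt_linearMap_exp_smul_mul φ M (M ^ k) t).deriv, mul_assoc, ← pow_succ']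

end Matrix

/-- As β → 0⁺ the subgraph centrality ranking reduces to the degree ranking: if
deg(v_i) > deg(v_j) then for all sufficiently small β > 0 one has
[e^{βA}]_{ii} > [e^{βA}]_{jj}. -/
theorem stmt10 {N : ℕ} (G : SimpleGraph (Fin N)) [DecidableRel G.Adj]
    (i j : Fin N) (h : G.degree j < G.degree i) :
    ∃ ε > 0, ∀ β : ℝ, 0 < β → β < ε →
      (NormedSpace.exp (β • G.adjMatrix ℝ)) j j <
      (NormedSpace.exp (β • G.adjMatrix ℝ)) i i := by
  set A := G.adjMatrix ℝ
  let φ : Matrix (Fin N) (Fin N) ℝ →ₗ[ℝ] ℝ := entryLinearMap ℝ ℝ i i - entryLinearMap ℝ ℝ j j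
  set f : ℝ → ℝ := fun β => φ (exp (β • A))
  have hderiv (k : ℕ) : deriv^[k] f 0 = (A ^ k) i i - (A ^ k) j j := by
    rw [iterate_deriv_linearMap_exp_smul]
    simp [φ]
  have hcont : ContinuousAt f 0 := by
    simpa using (hasDerivAt_linearMap_exp_smul_mul φ A 1 0).continuousAt
  have hd1 : deriv f 0 = 0 := by
    change deriv^[1] f 0 = 0
    rw [hderiv, pow_one]
    simp [A]
  have hd2 : 0 < deriv (deriv f) 0 := by
    change 0 < deriv^[2] f 0
    rw [hderiv, sq, SimpleGraph.adjMatrix_mul_self_apply_self,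
      SimpleGraph.adjMatrix_mul_self_apply_self, sub_pos]
    exact_mod_cast h
  obtain ⟨ε, hε, hlt⟩ := (nhdsGT_basis 0).eventually_iff.mp
    (eventually_nhdsGT_lt_of_deriv_deriv_pos hd2 hd1 hcont)
  refine ⟨ε, hε, fun β hβ hβε => ?_⟩
  simpa [f, φ, sub_pos] using hlt ⟨hβ, hβε⟩
end

section
/- Let G be a finite simple undirected graph on N ≥ 1 vertices with adjacency matrix A, and define the bipartivity measure B = Tr(cosh(A)) / Tr(exp(A)). Then 1/2 < B ≤ 1, and B = 1 if and only if G is bipartite. -/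
/-!
Expanding the exponentials, `Tr exp(±A) = ∑ (±1)ⁿ Tr(Aⁿ) / n!`, where `Tr(Aⁿ) ≥ 0` counts closed
walks of length `n`. Hence `Tr exp(-A) ≤ Tr exp(A)`, with equality exactly when there is no closed
walk of odd length, i.e. when `G` is bipartite. Since `exp(-A) = exp(-A/2) exp(-A/2)ᵀ` is positive
definite, `Tr exp(-A) > 0`, and `B = (Tr exp(A) + Tr exp(-A)) / (2 Tr exp(A))` lies in `(1/2, 1]`.
-/

open Matrix NormedSpace
open scoped Nat

theorem neg_one_pow_mul_le_self {x : ℝ} (hx : 0 ≤ x) (n : ℕ) : (-1) ^ n * x ≤ x := by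
  rcases n.even_or_odd with hn | hn
  · rw [hn.neg_one_pow, one_mul]
  · rw [hn.neg_one_pow]; linarith

theorem hasSum_neg_one_pow_mul_le {f : ℕ → ℝ} (hf : ∀ n, 0 ≤ f n) {s t : ℝ} (hs : HasSum f s)
    (ht : HasSum (fun n ↦ (-1) ^ n * f n) t) : t ≤ s :=
  hasSum_le (fun n ↦ neg_one_pow_mul_le_self (hf n) n) ht hs

theorem hasSum_neg_one_pow_mul_eq_iff {f : ℕ → ℝ} (hf : ∀ n, 0 ≤ f n) {s t : ℝ}
    (hs : HasSum f s) (ht : HasSum (fun n ↦ (-1) ^ n * f n) t) :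
    t = s ↔ ∀ n, Odd n → f n = 0 := by
  have hdiff : HasSum (fun n ↦ f n - (-1) ^ n * f n) (s - t) := hs.sub ht
  have hnonneg (n : ℕ) : 0 ≤ f n - (-1) ^ n * f n :=
    sub_nonneg.mpr (neg_one_pow_mul_le_self (hf n) n)
  have hterm (n : ℕ) : f n - (-1) ^ n * f n = 0 ↔ (Odd n → f n = 0) := by
    rcases n.even_or_odd with hn | hn
    · simp [hn.neg_one_pow, Nat.not_odd_iff_even.mpr hn]
    · simp [hn.neg_one_pow, hn]
  calc t = s ↔ HasSum (fun n ↦ f n - (-1) ^ n * f n) 0 := by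
        rw [eq_comm, ← sub_eq_zero]; exact ⟨fun h ↦ h ▸ hdiff, hdiff.unique⟩
    _ ↔ _ := hasSum_zero_iff_of_nonneg hnonneg
    _ ↔ ∀ n, Odd n → f n = 0 := funext_iff.trans (forall_congr' hterm)

theorem Matrix.hasSum_trace_exp {m : Type*} [Fintype m] [DecidableEq m] (M : Matrix m m ℝ) :
    HasSum (fun n ↦ (n !⁻¹ : ℝ) * trace (M ^ n)) (trace (exp M)) := by
  open scoped Matrix.Norms.Operator in
  exact ((exp_series_hasSum_exp' (𝕂 := ℝ) M).mapL
    (traceLinearMap m ℝ ℝ).toContinuousLinearMap).congr_fun fun n ↦ by simp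

theorem Matrix.hasSum_trace_exp_neg {m : Type*} [Fintype m] [DecidableEq m] (M : Matrix m m ℝ) :
    HasSum (fun n ↦ (-1) ^ n * ((n !⁻¹ : ℝ) * trace (M ^ n))) (trace (exp (-M))) := by
  refine (hasSum_trace_exp (-M)).congr_fun fun n ↦ ?_
  rw [← neg_one_smul ℝ M, smul_pow, trace_smul, smul_eq_mul, mul_left_comm]

open scoped ComplexOrder in
theorem Matrix.IsHermitian.posDef_exp {m 𝕜 : Type*} [Fintype m] [DecidableEq m] [RCLike 𝕜]
    {M : Matrix m m 𝕜} (hM : M.IsHermitian) : (NormedSpace.exp M).PosDef := by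
  set E := NormedSpace.exp ((2⁻¹ : ℝ) • M)
  have hsq : NormedSpace.exp M = E * Eᴴ := by
    rw [← exp_conjTranspose, conjTranspose_smul, hM.eq, star_trivial,
      ← exp_add_of_commute _ _ (Commute.refl _), ← add_smul]
    norm_num
  rw [hsq]
  exact .mul_conjTranspose_self E (vecMul_injective_of_isUnit (isUnit_exp _))

namespace SimpleGraph

variable {V : Type*} [Fintype V] [DecidableEq V] (G : SimpleGraph V) [DecidableRel G.Adj]
  {R : Type*} [Semiring R]

theorem trace_adjMatrix_pow (n : ℕ) :
    (G.adjMatrix R ^ n).trace = ((∑ u, Fintype.card {p : G.Walk u u | p.length = n} : ℕ) : R) := by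
  simp [trace, adjMatrix_pow_apply_eq_card_walk]

theorem trace_adjMatrix_pow_nonneg [PartialOrder R] [IsOrderedRing R] (n : ℕ) :
    0 ≤ (G.adjMatrix R ^ n).trace := by
  rw [trace_adjMatrix_pow]; exact Nat.cast_nonneg _

theorem trace_adjMatrix_pow_eq_zero_iff [CharZero R] (n : ℕ) :
    (G.adjMatrix R ^ n).trace = 0 ↔ ∀ u (p : G.Walk u u), p.length ≠ n := by
  simp only [trace_adjMatrix_pow, Nat.cast_eq_zero, Finset.sum_eq_zero_iff, Finset.mem_univ,
    true_implies, Fintype.card_eq_zero_iff, isEmpty_subtype, Set.mem_ofPred_eq]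

theorem colorable_two_iff_forall_odd_trace_adjMatrix_pow_eq_zero [CharZero R] :
    G.Colorable 2 ↔ ∀ n, Odd n → (G.adjMatrix R ^ n).trace = 0 := by
  simp_rw [two_colorable_iff_forall_loop_even, trace_adjMatrix_pow_eq_zero_iff,
    ← Nat.not_odd_iff_even]
  exact ⟨fun h n hn u p hp ↦ h u p (hp ▸ hn), fun h u p hp ↦ h _ hp u p rfl⟩

end SimpleGraph

/-- The bipartivity measure B = Tr(cosh(A))/Tr(exp(A)), where
cosh(A) = (exp(A) + exp(-A))/2, satisfies 1/2 < B ≤ 1, with B = 1 if and only if the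
graph is bipartite (i.e., 2-colorable). -/
theorem stmt17 {N : ℕ} (hN : 0 < N) (G : SimpleGraph (Fin N)) [DecidableRel G.Adj]
    (B : ℝ)
    (hB : B = Matrix.trace ((1 / 2 : ℝ) •
        (NormedSpace.exp (G.adjMatrix ℝ) + NormedSpace.exp (-(G.adjMatrix ℝ)))) /
      Matrix.trace (NormedSpace.exp (G.adjMatrix ℝ))) :
    (1 / 2 < B ∧ B ≤ 1) ∧ (B = 1 ↔ G.Colorable 2) := by
  set A := G.adjMatrix ℝ
  have hterm (n : ℕ) : 0 ≤ (n !⁻¹ : ℝ) * trace (A ^ n) :=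
    mul_nonneg (by positivity) (G.trace_adjMatrix_pow_nonneg n)
  have hCD : trace (exp (-A)) ≤ trace (exp A) :=
    hasSum_neg_one_pow_mul_le hterm A.hasSum_trace_exp A.hasSum_trace_exp_neg
  have hCD_iff : trace (exp (-A)) = trace (exp A) ↔ G.Colorable 2 := by
    rw [hasSum_neg_one_pow_mul_eq_iff hterm A.hasSum_trace_exp A.hasSum_trace_exp_neg,
      G.colorable_two_iff_forall_odd_trace_adjMatrix_pow_eq_zero (R := ℝ)]
    simp [A, Nat.factorial_ne_zero]
  have : Nonempty (Fin N) := ⟨⟨0, hN⟩⟩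
  have hC : 0 < trace (exp (-A)) := (G.isHermitian_adjMatrix ℝ).neg.posDef_exp.trace_pos
  have hB' : B = (trace (exp A) + trace (exp (-A))) / (2 * trace (exp A)) := by
    rw [hB, trace_smul, trace_add, smul_eq_mul]; ring
  have hD : 0 < 2 * trace (exp A) := by linarith
  rw [hB', ← hCD_iff, lt_div_iff₀ hD, div_le_one hD, div_eq_one_iff_eq hD.ne']
  exact ⟨⟨by linarith, by linarith⟩, fun h ↦ by linarith, fun h ↦ by linarith⟩
end
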